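/- arXiv:1011.3434 — 3 statements merged into one kernel-verified Lean document; each statement's English description precedes it below -/
import Mathlib

section
/- Let L > 2 be real, set Δ := 1/L and ε₁ := 24 exp(−L), and define Φ₊(x) := L ∫_{−1/2−√Δ}^{1/2+√Δ} Γ((x−μ)L) dμ + ε₁ Γ(x) and Φ₋(x) := L ∫_{−1/2+√Δ}^{1/2−√Δ} Γ((x−μ)L) dμ − ε₁ Γ(x). Let χ be the characteristic function of the interval [−1/2, 1/2). Then Φ₋(x) ≤ χ(x) ≤ Φ₊(x) for all x ∈ ℝ, and ∫_{−∞}^{∞} Φ₊(x) dx = 1 + (2√Δ + ε₁) and ∫_{−∞}^{∞} Φ₋(x) dx = 1 − (2√Δ + ε₁). -/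
open MeasureTheory

/-- The Gaussian weight `Γ(x) = exp(−πx²)`. -/
noncomputable def gauss (x : ℝ) : ℝ := Real.exp (-Real.pi * x ^ 2)

/-!
The substitution `t = (x - μ) L` turns `L ∫_a^b Γ((x - μ) L) dμ` into the Gaussian mass of
the window `[(x - b) L, (x - a) L]`, and by Fubini its integral over `x` is `b - a`; with
`∫ Γ = 1` this gives both integrals. For `x ∈ [-1/2, 1/2)` the window of `Φ₊` contains `[-√L, √L]`
(as `√Δ L = √L`), so it misses a mass of at most `2Γ(√L) = 2e^{-πL} ≤ ε₁Γ(x)`. For `x ≥ 1/2`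
the window of `Φ₋` starts at `(x - 1/2) L + √L`, and the tail bound `∫_v^∞ Γ ≤ Γ(v)` for
`v ≥ 1/2` makes its mass at most `ε₁Γ(x)`; `x < -1/2` is the mirror image.
-/

open Real Set

lemma gauss_pos (x : ℝ) : 0 < gauss x := exp_pos _

lemma gauss_neg (x : ℝ) : gauss (-x) = gauss x := by simp [gauss]

lemma gauss_le_gauss {x y : ℝ} (hx : 0 ≤ x) (hxy : x ≤ y) : gauss y ≤ gauss x :=
  exp_le_exp.2 (by nlinarith [pi_pos, mul_le_mul hxy hxy hx (hx.trans hxy)])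

lemma continuous_gauss : Continuous gauss := by unfold gauss; fun_prop

lemma integrable_gauss : Integrable gauss := integrable_exp_neg_mul_sq pi_pos

lemma integral_gauss : ∫ x, gauss x = 1 := by
  simpa [gauss, div_self pi_pos.ne'] using integral_gaussian π

lemma integral_gauss_Ioi_le {v : ℝ} (hv : 1 / 2 ≤ v) : ∫ t in Ioi v, gauss t ≤ gauss v := by
  have hπ : -π < 0 := neg_lt_zero.2 pi_pos
  -- `t² - t ≥ v² - v` for `t ≥ v ≥ 1/2` dominates the Gaussian tail by an exponential one
  have hbound : ∀ t ∈ Ioi v, gauss t ≤ exp (π * v - π * v ^ 2) * exp (-π * t) := by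
    intro t (ht : v < t)
    rw [gauss, ← exp_add]
    gcongr
    have hfactor : 0 ≤ (t - v) * (t + v - 1) := mul_nonneg (by linarith) (by linarith)
    nlinarith [mul_nonneg pi_pos.le hfactor]
  calc ∫ t in Ioi v, gauss t
      ≤ ∫ t in Ioi v, exp (π * v - π * v ^ 2) * exp (-π * t) :=
        setIntegral_mono_on integrable_gauss.integrableOn
          ((integrableOn_exp_mul_Ioi hπ v).const_mul _) measurableSet_Ioi hbound
    _ = gauss v / π := by
        rw [integral_const_mul, integral_exp_mul_Ioi hπ, neg_div_neg_eq, mul_div_assoc',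
          ← exp_add, gauss]
        ring_nf
    _ ≤ gauss v := div_le_self (gauss_pos v).le (by linarith [pi_gt_three])

lemma integral_gauss_Iic_eq (u : ℝ) : ∫ t in Iic u, gauss t = ∫ t in Ioi (-u), gauss t := by
  simpa [gauss_neg] using (integral_comp_neg_Ioi (-u) gauss).symm

lemma intervalIntegral_gauss_le_one (u v : ℝ) : ∫ t in u..v, gauss t ≤ 1 := by
  rcases le_total u v with h | h
  · rw [intervalIntegral.integral_of_le h, ← integral_gauss]
    exact setIntegral_le_integral integrable_gauss (.of_forall fun t => (gauss_pos t).le)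
  · rw [intervalIntegral.integral_symm]
    linarith [intervalIntegral.integral_nonneg (μ := volume) h fun t _ => (gauss_pos t).le]

lemma intervalIntegral_gauss_le {u : ℝ} (hu : 1 / 2 ≤ u) (v : ℝ) :
    ∫ t in u..v, gauss t ≤ gauss u := by
  rcases le_total u v with h | h
  · calc ∫ t in u..v, gauss t ≤ ∫ t in Ioi u, gauss t := by
          rw [intervalIntegral.integral_of_le h]
          exact setIntegral_mono_set integrable_gauss.integrableOn
            (.of_forall fun t => (gauss_pos t).le) Ioc_subset_Ioi_self.eventuallyLE
      _ ≤ gauss u := integral_gauss_Ioi_le hu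
  · rw [intervalIntegral.integral_symm]
    linarith [intervalIntegral.integral_nonneg (μ := volume) h fun t _ => (gauss_pos t).le,
      gauss_pos u]

lemma one_sub_le_intervalIntegral_gauss {c u v : ℝ} (hc : 1 / 2 ≤ c) (hu : u ≤ -c) (hv : c ≤ v) :
    1 - 2 * gauss c ≤ ∫ t in u..v, gauss t := by
  have hsplit : (∫ t in Iic v, gauss t) + ∫ t in Ioi v, gauss t = 1 := by
    rw [← integral_gauss, ← compl_Iic]
    exact integral_add_compl measurableSet_Iic integrable_gauss
  rw [← intervalIntegral.integral_Iic_sub_Iic integrable_gauss.integrableOn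
    integrable_gauss.integrableOn, integral_gauss_Iic_eq u]
  have hleft := (integral_gauss_Ioi_le (hc.trans (le_neg.2 hu))).trans
    (gauss_le_gauss (by linarith) (le_neg.2 hu))
  have hright := (integral_gauss_Ioi_le (hc.trans hv)).trans
    (gauss_le_gauss (by linarith) hv)
  linarith

noncomputable def gaussSmoothing (L a b x : ℝ) : ℝ := L * ∫ μ in a..b, gauss ((x - μ) * L)

lemma gaussSmoothing_eq_intervalIntegral {L : ℝ} (hL : 0 < L) (a b x : ℝ) :
    gaussSmoothing L a b x = ∫ t in (x - b) * L..(x - a) * L, gauss t := by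
  rw [gaussSmoothing, intervalIntegral.integral_comp_sub_left (fun u => gauss (u * L)) x,
    intervalIntegral.integral_comp_mul_right _ hL.ne', smul_eq_mul, mul_inv_cancel_left₀ hL.ne']

lemma gaussSmoothing_neg (L a b x : ℝ) :
    gaussSmoothing L a b (-x) = gaussSmoothing L (-b) (-a) x := by
  have h := intervalIntegral.integral_comp_neg (a := a) (b := b) fun μ => gauss ((x - μ) * L)
  simp only [sub_neg_eq_add] at h
  rw [gaussSmoothing, gaussSmoothing, ← h]
  congr 2
  ext μ
  rw [← gauss_neg]
  ring_nf

lemma gaussSmoothing_symm (L a b x : ℝ) : gaussSmoothing L b a x = -gaussSmoothing L a b x := by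
  rw [gaussSmoothing, gaussSmoothing, intervalIntegral.integral_symm, mul_neg]

lemma gaussSmoothing_nonneg {L a b : ℝ} (hL : 0 ≤ L) (hab : a ≤ b) (x : ℝ) :
    0 ≤ gaussSmoothing L a b x :=
  mul_nonneg hL (intervalIntegral.integral_nonneg hab fun _ _ => (gauss_pos _).le)

lemma integral_gauss_comp_sub_mul {L : ℝ} (hL : 0 < L) (μ : ℝ) :
    ∫ x, gauss ((x - μ) * L) = L⁻¹ := by
  rw [integral_sub_right_eq_self (fun x => gauss (x * L)) μ, Measure.integral_comp_mul_right,
    integral_gauss, abs_of_pos (inv_pos.2 hL), smul_eq_mul, mul_one]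

lemma integrable_uncurry_gauss_comp_sub_mul {L : ℝ} (hL : 0 < L) (a b : ℝ) :
    Integrable (Function.uncurry fun x μ : ℝ => gauss ((x - μ) * L))
      (volume.prod (volume.restrict (Ioc a b))) := by
  have hcont : Continuous (Function.uncurry fun x μ : ℝ => gauss ((x - μ) * L)) :=
    continuous_gauss.comp ((continuous_fst.sub continuous_snd).mul continuous_const)
  refine (integrable_prod_iff' hcont.aestronglyMeasurable).2 ⟨.of_forall fun μ => ?_, ?_⟩
  · simpa [sub_mul] using (integrable_gauss.comp_mul_right' hL.ne').comp_sub_right μ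
  · refine (integrable_const L⁻¹).congr (.of_forall fun μ => ?_)
    simp only [Function.uncurry_apply_pair, Real.norm_of_nonneg (gauss_pos _).le]
    exact (integral_gauss_comp_sub_mul hL μ).symm

lemma gaussSmoothing_eq_setIntegral {L a b : ℝ} (hab : a ≤ b) (x : ℝ) :
    gaussSmoothing L a b x = L * ∫ μ in Ioc a b, gauss ((x - μ) * L) := by
  rw [gaussSmoothing, intervalIntegral.integral_of_le hab]

lemma integrable_gaussSmoothing {L : ℝ} (hL : 0 < L) (a b : ℝ) :
    Integrable (gaussSmoothing L a b) := by
  wlog hab : a ≤ b generalizing a b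
  · simpa [funext (gaussSmoothing_symm L b a)] using (this b a (le_of_not_ge hab)).neg
  simpa [funext (gaussSmoothing_eq_setIntegral hab)] using
    ((integrable_uncurry_gauss_comp_sub_mul hL a b).integral_prod_left).const_mul L

lemma integral_gaussSmoothing {L : ℝ} (hL : 0 < L) (a b : ℝ) :
    ∫ x, gaussSmoothing L a b x = b - a := by
  wlog hab : a ≤ b generalizing a b
  · simp only [gaussSmoothing_symm L b a, integral_neg, this b a (le_of_not_ge hab), neg_sub]
  simp only [gaussSmoothing_eq_setIntegral hab, integral_const_mul]
  rw [integral_integral_swap (integrable_uncurry_gauss_comp_sub_mul hL a b),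
    setIntegral_congr_fun measurableSet_Ioc fun μ _ => integral_gauss_comp_sub_mul hL μ,
    setIntegral_const, smul_eq_mul, Real.volume_real_Ioc_of_le hab]
  field_simp

lemma two_mul_gauss_sqrt_le {L x : ℝ} (hL : 1 ≤ L) (hx : x ^ 2 ≤ 1 / 4) :
    2 * gauss √L ≤ 24 * exp (-L) * gauss x := by
  have hexp : gauss √L ≤ exp (-L) * gauss x := by
    rw [gauss, gauss, sq_sqrt (by linarith), ← exp_add]
    exact exp_le_exp.2 (by nlinarith [pi_gt_three])
  nlinarith [gauss_pos √L]

lemma gauss_mul_add_sqrt_le {L y : ℝ} (hL : 1 ≤ L) (hy : 0 ≤ y) :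
    gauss (y * L + √L) ≤ 24 * exp (-L) * gauss (y + 1 / 2) := by
  have hsqrt : 1 ≤ √L := one_le_sqrt.2 hL
  have hsq : √L ^ 2 = L := sq_sqrt (by linarith)
  have hexp : gauss (y * L + √L) ≤ exp (-L) * gauss (y + 1 / 2) := by
    rw [gauss, gauss, ← exp_add]
    refine exp_le_exp.2 ?_
    have h1 : 0 ≤ π * y ^ 2 * (L ^ 2 - 1) :=
      mul_nonneg (mul_nonneg pi_pos.le (sq_nonneg y)) (by nlinarith)
    have h2 : 0 ≤ π * y * (2 * L * √L - 1) :=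
      mul_nonneg (mul_nonneg pi_pos.le hy) (by nlinarith)
    nlinarith [pi_gt_three]
  nlinarith [gauss_pos (y * L + √L), exp_pos (-L), gauss_pos (y + 1 / 2)]

lemma sqrt_one_div_mul_self (L : ℝ) : √(1 / L) * L = √L := by
  rw [one_div, sqrt_inv, inv_mul_eq_div, div_sqrt]

lemma indicator_le_gaussSmoothing_add {L : ℝ} (hL : 1 ≤ L) (x : ℝ) :
    (Ico (-(1 : ℝ) / 2) (1 / 2)).indicator (fun _ => (1 : ℝ)) x ≤
      gaussSmoothing L (-1 / 2 - √(1 / L)) (1 / 2 + √(1 / L)) x + 24 * exp (-L) * gauss x := by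
  have hs : √(1 / L) * L = √L := sqrt_one_div_mul_self L
  have hs0 : 0 ≤ √(1 / L) := sqrt_nonneg _
  by_cases hx : x ∈ Ico (-(1 : ℝ) / 2) (1 / 2)
  · rw [indicator_of_mem hx, gaussSmoothing_eq_intervalIntegral (by linarith)]
    obtain ⟨hx₁, hx₂⟩ := hx
    have hwindow := one_sub_le_intervalIntegral_gauss (c := √L)
      (u := (x - (1 / 2 + √(1 / L))) * L) (v := (x - (-1 / 2 - √(1 / L))) * L)
      (by linarith [one_le_sqrt.2 hL])
      (by nlinarith [mul_nonneg (by linarith : 0 ≤ 1 / 2 - x) (by linarith : 0 ≤ L)])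
      (by nlinarith [mul_nonneg (by linarith : 0 ≤ x + 1 / 2) (by linarith : 0 ≤ L)])
    have htail := two_mul_gauss_sqrt_le hL (x := x) (by nlinarith)
    linarith
  · rw [indicator_of_notMem hx]
    have := gaussSmoothing_nonneg (by linarith) (by linarith) x (L := L)
      (a := -1 / 2 - √(1 / L)) (b := 1 / 2 + √(1 / L))
    nlinarith [gauss_pos x, exp_pos (-L)]

lemma gaussSmoothing_le_of_half_le {L x : ℝ} (hL : 1 ≤ L) (hx : 1 / 2 ≤ x) :
    gaussSmoothing L (-1 / 2 + √(1 / L)) (1 / 2 - √(1 / L)) x ≤ 24 * exp (-L) * gauss x := by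
  have hs : √(1 / L) * L = √L := sqrt_one_div_mul_self L
  have hlower : (x - (1 / 2 - √(1 / L))) * L = (x - 1 / 2) * L + √L := by linear_combination hs
  rw [gaussSmoothing_eq_intervalIntegral (by linarith), hlower]
  calc _ ≤ gauss ((x - 1 / 2) * L + √L) :=
        intervalIntegral_gauss_le (by nlinarith [one_le_sqrt.2 hL]) _
    _ ≤ 24 * exp (-L) * gauss (x - 1 / 2 + 1 / 2) := gauss_mul_add_sqrt_le hL (by linarith)
    _ = 24 * exp (-L) * gauss x := by rw [sub_add_cancel]

lemma gaussSmoothing_sub_le_indicator {L : ℝ} (hL : 1 ≤ L) (x : ℝ) :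
    gaussSmoothing L (-1 / 2 + √(1 / L)) (1 / 2 - √(1 / L)) x - 24 * exp (-L) * gauss x ≤
      (Ico (-(1 : ℝ) / 2) (1 / 2)).indicator (fun _ => (1 : ℝ)) x := by
  have hε : 0 ≤ 24 * exp (-L) * gauss x := by have := gauss_pos x; positivity
  by_cases hx : x ∈ Ico (-(1 : ℝ) / 2) (1 / 2)
  · rw [indicator_of_mem hx, gaussSmoothing_eq_intervalIntegral (by linarith)]
    linarith [intervalIntegral_gauss_le_one ((x - (1 / 2 - √(1 / L))) * L)
      ((x - (-1 / 2 + √(1 / L))) * L)]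
  rw [indicator_of_notMem hx, sub_nonpos]
  rcases le_or_gt (1 / 2) x with hx₂ | hx₂
  · exact gaussSmoothing_le_of_half_le hL hx₂
  · have hx₁ : x < -1 / 2 := by
      by_contra! h
      exact hx ⟨h, hx₂⟩
    have hsymm := gaussSmoothing_neg L (-1 / 2 + √(1 / L)) (1 / 2 - √(1 / L)) (-x)
    rw [neg_neg, show -(1 / 2 - √(1 / L)) = -1 / 2 + √(1 / L) by ring,
      show -(-1 / 2 + √(1 / L)) = 1 / 2 - √(1 / L) by ring] at hsymm
    rw [hsymm, ← gauss_neg x]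
    exact gaussSmoothing_le_of_half_le hL (by linarith)

theorem stmt3 (L : ℝ) (hL : 2 < L) (Δ ε₁ : ℝ)
    (hΔ : Δ = 1 / L) (hε₁ : ε₁ = 24 * Real.exp (-L))
    (Φp Φm : ℝ → ℝ)
    (hΦp : ∀ x, Φp x =
      L * (∫ μ in (-1/2 - Real.sqrt Δ)..(1/2 + Real.sqrt Δ), gauss ((x - μ) * L))
        + ε₁ * gauss x)
    (hΦm : ∀ x, Φm x =
      L * (∫ μ in (-1/2 + Real.sqrt Δ)..(1/2 - Real.sqrt Δ), gauss ((x - μ) * L))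
        - ε₁ * gauss x) :
    (∀ x : ℝ,
      Φm x ≤ (Set.Ico (-(1 : ℝ)/2) (1/2)).indicator (fun _ => (1 : ℝ)) x ∧
      (Set.Ico (-(1 : ℝ)/2) (1/2)).indicator (fun _ => (1 : ℝ)) x ≤ Φp x) ∧
    (∫ x : ℝ, Φp x) = 1 + (2 * Real.sqrt Δ + ε₁) ∧
    (∫ x : ℝ, Φm x) = 1 - (2 * Real.sqrt Δ + ε₁) := by
  subst hΔ hε₁
  have hL₀ : 0 < L := by linarith
  obtain rfl : Φp = fun x => gaussSmoothing L (-1 / 2 - √(1 / L)) (1 / 2 + √(1 / L)) x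
      + 24 * exp (-L) * gauss x := funext hΦp
  obtain rfl : Φm = fun x => gaussSmoothing L (-1 / 2 + √(1 / L)) (1 / 2 - √(1 / L)) x
      - 24 * exp (-L) * gauss x := funext hΦm
  refine ⟨fun x => ⟨gaussSmoothing_sub_le_indicator (by linarith) x,
    indicator_le_gaussSmoothing_add (by linarith) x⟩, ?_, ?_⟩
  · rw [integral_add (integrable_gaussSmoothing hL₀ _ _) (integrable_gauss.const_mul _),
      integral_gaussSmoothing hL₀, integral_const_mul, integral_gauss]
    ring
  · rw [integral_sub (integrable_gaussSmoothing hL₀ _ _) (integrable_gauss.const_mul _),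
      integral_gaussSmoothing hL₀, integral_const_mul, integral_gauss]
    ring
end

section
/- There is an absolute constant C such that for all β > 0 and all α ∈ ℝ with |α| ≥ 1/β, |F(α, β)| ≤ C exp(−π|α|/(12β)). -/
/-! The integrand extends to the entire function `exp(−πz² + 2πi(−βz³ − αz))`, whose modulus on
the line `Im z = y` is `exp(−π(1 − 6βy)x² + π(y² − 2βy³ + 2αy))`. For `|y| ≤ 1/(12β)` this keeps
Gaussian decay in `x`, so Cauchy's theorem moves the integral to the line `Im z = c` with
`c = −sgn(α)/(12β)`. There `exp(2παc) = exp(−π|α|/(6β))` beats the loss `exp(π(c² − 2βc³))`,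
which is at most `exp(7πc²/6)`, as soon as `|α| ≥ 1/β`; what remains is `exp(−π|α|/(12β))` times
`∫ exp(−πx²/2) = √2`. -/

open MeasureTheory

/-- `F(α,β) = ∫_{−∞}^{∞} Γ(x) e(−βx³ − αx) dx`, where `e(x) = exp(2πix)`. -/
noncomputable def Fab (α β : ℝ) : ℂ :=
  ∫ x : ℝ, (gauss x : ℂ) * Complex.exp (2 * Real.pi * Complex.I * ((-β * x ^ 3 - α * x : ℝ) : ℂ))

open Real Complex Filter Topology

section ContourShift

variable {f : ℂ → ℂ} {b : ℝ → ℝ} {c : ℝ}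

theorem integrable_comp_add_mul_I_of_norm_le (hf : Continuous f) (hb : Integrable b)
    (y : ℝ) (hfb : ∀ x : ℝ, ‖f (x + y * I)‖ ≤ b x) :
    Integrable fun x : ℝ => f (x + y * I) :=
  hb.mono' (hf.comp (by fun_prop)).aestronglyMeasurable (.of_forall hfb)

theorem tendsto_integral_vertical_of_norm_le {l : Filter ℝ} (hb : Tendsto b l (𝓝 0))
    (hfb : ∀ x : ℝ, ∀ y ∈ Set.uIcc 0 c, ‖f (x + y * I)‖ ≤ b x) :
    Tendsto (fun x : ℝ => ∫ y in (0 : ℝ)..c, f (x + y * I)) l (𝓝 0) := by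
  refine squeeze_zero_norm (fun x => ?_) (by simpa using hb.mul_const |c|)
  simpa using intervalIntegral.norm_integral_le_of_norm_le_const
    fun y hy => hfb x y (Set.uIoc_subset_uIcc hy)

theorem integral_comp_add_mul_I_eq_integral (hf : Differentiable ℂ f) (hb : Integrable b)
    (hb_lim : Tendsto b (cocompact ℝ) (𝓝 0))
    (hfb : ∀ x : ℝ, ∀ y ∈ Set.uIcc 0 c, ‖f (x + y * I)‖ ≤ b x) :
    ∫ x : ℝ, f (x + c * I) = ∫ x : ℝ, f x := by
  have hline (y : ℝ) (hy : y ∈ Set.uIcc 0 c) : Tendsto (fun T : ℝ => ∫ x in -T..T, f (x + y * I))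
      atTop (𝓝 (∫ x : ℝ, f (x + y * I))) :=
    intervalIntegral_tendsto_integral
      (integrable_comp_add_mul_I_of_norm_le hf.continuous hb y fun x => hfb x y hy)
      tendsto_neg_atTop_atBot tendsto_id
  have hright := tendsto_integral_vertical_of_norm_le (hb_lim.mono_left atTop_le_cocompact) hfb
  have hleft := (tendsto_integral_vertical_of_norm_le
    (hb_lim.mono_left atBot_le_cocompact) hfb).comp tendsto_neg_atTop_atBot
  have hrect (T : ℝ) := integral_boundary_rect_eq_zero_of_differentiableOn f (-T) (T + c * I)
    hf.differentiableOn
  simp only [neg_re, neg_im, ofReal_re, ofReal_im, add_re, add_im, mul_re, mul_im, I_re, I_im,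
    mul_zero, zero_mul, mul_one, sub_zero, add_zero, zero_add, neg_zero, ofReal_zero,
    smul_eq_mul] at hrect
  have hreal := hline 0 Set.left_mem_uIcc
  simp only [ofReal_zero, zero_mul, add_zero] at hreal
  refine tendsto_nhds_unique (hline c Set.right_mem_uIcc) ?_
  simpa using (hreal.add (hright.const_mul I)).sub (hleft.const_mul I) |>.congr fun T => by
    simp only [Function.comp_apply]
    linear_combination hrect T

end ContourShift

theorem tendsto_const_mul_exp_neg_mul_sq_cocompact {a : ℝ} (ha : 0 < a) (M : ℝ) :
    Tendsto (fun x : ℝ => M * rexp (-a * x ^ 2)) (cocompact ℝ) (𝓝 0) := by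
  simpa using (tendsto_rpow_abs_mul_exp_neg_mul_sq_cocompact ha 0).const_mul M

noncomputable def fabIntegrand (α β : ℝ) (z : ℂ) : ℂ :=
  cexp (-π * z ^ 2 + 2 * π * I * (-β * z ^ 3 - α * z))

theorem Fab_eq_integral_fabIntegrand (α β : ℝ) : Fab α β = ∫ x : ℝ, fabIntegrand α β x := by
  refine integral_congr_ae (.of_forall fun x => ?_)
  dsimp only
  rw [fabIntegrand, gauss, ofReal_exp, ← Complex.exp_add]
  push_cast
  ring_nf

theorem differentiable_fabIntegrand (α β : ℝ) : Differentiable ℂ (fabIntegrand α β) := by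
  unfold fabIntegrand
  fun_prop

theorem norm_fabIntegrand (α β x y : ℝ) :
    ‖fabIntegrand α β (x + y * I)‖ =
      rexp (-π * (1 - 6 * β * y) * x ^ 2 + π * (y ^ 2 - 2 * β * y ^ 3 + 2 * α * y)) := by
  rw [fabIntegrand, norm_exp]
  congr 1
  simp only [pow_succ, pow_zero, one_mul, neg_mul, add_re, neg_re, mul_re, ofReal_re, I_re,
    mul_zero, ofReal_im, I_im, mul_one, sub_self, add_zero, add_im, mul_im, zero_add, zero_mul,
    sub_zero, re_ofNat, im_ofNat, sub_re, sub_im, neg_im, zero_sub]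
  ring

theorem norm_fabIntegrand_le {α β y : ℝ} (hy : 12 * β * y ≤ 1) (x : ℝ) :
    ‖fabIntegrand α β (x + y * I)‖ ≤
      rexp (π * (y ^ 2 - 2 * β * y ^ 3 + 2 * α * y)) * rexp (-(π / 2) * x ^ 2) := by
  rw [norm_fabIntegrand, ← Real.exp_add, add_comm]
  gcongr
  nlinarith [pi_pos]

theorem norm_fabIntegrand_le_of_abs_le {α β s y : ℝ} (hβ : 0 ≤ β) (hs : 12 * β * s ≤ 1)
    (hy : |y| ≤ s) (x : ℝ) :
    ‖fabIntegrand α β (x + y * I)‖ ≤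
      rexp (π * (s ^ 2 + 2 * β * s ^ 3 + 2 * |α| * s)) * rexp (-(π / 2) * x ^ 2) := by
  have hy' : 12 * β * y ≤ 1 := by nlinarith [le_abs_self y]
  refine (norm_fabIntegrand_le hy' x).trans ?_
  gcongr rexp (π * ?_) * _
  have h2 : y ^ 2 ≤ s ^ 2 := sq_le_sq' (abs_le.1 hy).1 (abs_le.1 hy).2
  have h3 : -y ^ 3 ≤ s ^ 3 := by
    have := pow_le_pow_left₀ (abs_nonneg y) hy 3
    rw [← abs_pow] at this
    linarith [neg_abs_le (y ^ 3)]
  have h1 : α * y ≤ |α| * s := by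
    have := abs_mul α y ▸ le_abs_self (α * y)
    nlinarith [abs_nonneg α]
  nlinarith

theorem exists_abs_eq_and_cubic_le {α β : ℝ} (hβ : 0 < β) (hα : 1 / β ≤ |α|) :
    ∃ c : ℝ, |c| = 1 / (12 * β) ∧
      c ^ 2 - 2 * β * c ^ 3 + 2 * α * c ≤ -|α| / (12 * β) := by
  set s := 1 / (12 * β) with hs
  have hs_pos : 0 < s := by positivity
  have hβs : β * s = 1 / 12 := by rw [hs]; field_simp
  have hαs : 12 * s ≤ |α| := by rwa [hs, show 12 * (1 / (12 * β)) = 1 / β by field_simp]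
  have hdiv : -|α| / (12 * β) = -|α| * s := by rw [hs]; ring
  rw [hdiv]
  rcases le_or_gt 0 α with h | h
  · refine ⟨-s, by rw [abs_neg, abs_of_pos hs_pos], ?_⟩
    rw [abs_of_nonneg h] at hαs ⊢
    nlinarith
  · refine ⟨s, abs_of_pos hs_pos, ?_⟩
    rw [abs_of_neg h] at hαs ⊢
    nlinarith

theorem stmt9 :
    ∃ C : ℝ, ∀ α β : ℝ, 0 < β → 1 / β ≤ |α| →
      ‖Fab α β‖ ≤ C * Real.exp (-(Real.pi * |α|) / (12 * β)) := by
  refine ⟨√2, fun α β hβ hα => ?_⟩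
  obtain ⟨c, hc, hcubic⟩ := exists_abs_eq_and_cubic_le hβ hα
  have hs : 12 * β * (1 / (12 * β)) = 1 := by field_simp
  have hc12 : 12 * β * c ≤ 1 := by nlinarith [le_abs_self c]
  have hstrip (x y : ℝ) (hy : y ∈ Set.uIcc 0 c) :=
    norm_fabIntegrand_le_of_abs_le (α := α) hβ.le hs.le
      (by simpa [hc] using Set.abs_sub_left_of_mem_uIcc hy) x
  rw [Fab_eq_integral_fabIntegrand, ← integral_comp_add_mul_I_eq_integral
    (differentiable_fabIntegrand α β) ((integrable_exp_neg_mul_sq (by positivity)).const_mul _)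
    (tendsto_const_mul_exp_neg_mul_sq_cocompact (by positivity) _) hstrip]
  calc ‖∫ x : ℝ, fabIntegrand α β (x + c * I)‖
      ≤ ∫ x : ℝ, rexp (π * (c ^ 2 - 2 * β * c ^ 3 + 2 * α * c)) * rexp (-(π / 2) * x ^ 2) :=
        norm_integral_le_of_norm_le ((integrable_exp_neg_mul_sq (by positivity)).const_mul _)
          (.of_forall (norm_fabIntegrand_le hc12))
    _ = √2 * rexp (π * (c ^ 2 - 2 * β * c ^ 3 + 2 * α * c)) := by
        rw [integral_const_mul, integral_gaussian, div_div_cancel₀ pi_pos.ne', mul_comm]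
    _ ≤ √2 * rexp (-(π * |α|) / (12 * β)) := by
        rw [show -(π * |α|) / (12 * β) = π * (-|α| / (12 * β)) by ring]
        gcongr
end

section
/- Let ε > 0. There is a constant C = C(ε) such that for every square-free positive integer k and every real z ≥ 1, | Σ_{|A| ≤ z} γ_{k²}(−4A³) − 2z ρ(k²)/k² | ≤ C k^{1+ε}, where the sum is over integers A with |A| ≤ z. -/
/-!
For squarefree `k` the Chinese remainder theorem factors `γ_{k²}` and `ρ(k²)` over the primes
`p ∣ k`. The ring `ZMod (p²)` is local and its non-units multiply to zero, so
`A ↦ γ_{p²}(-4A³)` only depends on `A mod p`: for a non-unit `A` the value `-4A³` vanishes, while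
for a unit `A` and odd `p` any `B ≡ A (mod p)` is `A (1 + d)` with `d² = 0`, hence `B = A c²` with
`c = 1 + d/2` a unit and `-4B³ = -4A³ (c³)²` (for `p = 2`, `-4 = 0` in `ZMod 4`).
Thus `A ↦ γ_{k²}(-4A³)` is `k`-periodic with period sum `T = ρ(k²)/k`, and its sum over the
`2⌊z⌋ + 1` integers `|A| ≤ z` is `2zT/k` up to `2T`. Finally `ρ(p²) ≤ 3p²` (for `p ≥ 5`: at most
two `β` over a unit `α`, only non-units `β` over a non-unit `α`), so `T ≤ 3^ω(k) k`, and
`3^ω(k) = O(k^ε)` because every prime `p > 3^(1/ε)` has `3 ≤ p^ε`.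
-/

open scoped BigOperators

/-- `γ_q(n)`: the number of residue classes `β` modulo `q` with `n ≡ 27β² (mod q)`. -/
noncomputable def gammaCount (q : ℕ) (n : ℤ) : ℕ :=
  Nat.card {β : ZMod q // (n : ZMod q) = 27 * β ^ 2}

/-- `ρ(q)`: the number of pairs of residue classes `(α, β)` modulo `q`
with `4α³ + 27β² ≡ 0 (mod q)`. -/
noncomputable def rhoDisc (q : ℕ) : ℕ :=
  Nat.card {p : ZMod q × ZMod q // 4 * p.1 ^ 3 + 27 * p.2 ^ 2 = 0}

open Finset

section LocalRing

variable {R : Type*} [CommRing R]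

theorem exists_isUnit_sq_eq_one_add (h2 : IsUnit (2 : R)) {d : R}
    (hd : d ^ 2 = 0) : ∃ c : R, IsUnit c ∧ c ^ 2 = 1 + d := by
  obtain ⟨u, hu⟩ := h2
  have hu' : 2 * (↑u⁻¹ : R) = 1 := hu ▸ u.mul_inv
  refine ⟨1 + ↑u⁻¹ * d, .of_mul_eq_one (1 - ↑u⁻¹ * d) ?_, ?_⟩
  · linear_combination (-(↑u⁻¹ : R) ^ 2) * hd
  · linear_combination d * hu' + (↑u⁻¹ : R) ^ 2 * hd

theorem IsLocalRing.eq_or_eq_neg_of_sq_eq_sq [IsLocalRing R]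
    (h2 : IsUnit (2 : R)) {x y : R} (hy : IsUnit y) (h : x ^ 2 = y ^ 2) : x = y ∨ x = -y := by
  have hprod : (x - y) * (x + y) = 0 := by linear_combination h
  have hsum : (x + y) + -(x - y) = 2 * y := by ring
  rcases isUnit_or_isUnit_of_isUnit_add (hsum ▸ h2.mul hy) with hu | hu
  · exact .inl (sub_eq_zero.1 (hu.mul_left_eq_zero.1 hprod))
  · exact .inr (eq_neg_of_add_eq_zero_left (((IsUnit.neg_iff _).1 hu).mul_right_eq_zero.1 hprod))

theorem IsLocalRing.card_filter_mul_sq_eq_le_two [IsLocalRing R]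
    [Fintype R] [DecidableEq R] (h2 : IsUnit (2 : R)) {a c : R} (ha : IsUnit a) :
    #{x | c * x ^ 2 = a} ≤ 2 := by
  rcases Finset.eq_empty_or_nonempty ({x | c * x ^ 2 = a} : Finset R) with he | ⟨y, hy⟩
  · simp [he]
  rw [mem_filter] at hy
  have hyu : IsUnit y := (isUnit_pow_iff two_ne_zero).1 (isUnit_of_mul_isUnit_right (hy.2 ▸ ha))
  have hcu : IsUnit c := isUnit_of_mul_isUnit_left (hy.2 ▸ ha)
  calc #{x | c * x ^ 2 = a} ≤ #{y, -y} := card_le_card fun x hx => by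
        rw [mem_filter, ← hy.2] at hx
        simpa using eq_or_eq_neg_of_sq_eq_sq h2 hyu (hcu.mul_right_injective hx.2)
    _ ≤ 2 := card_le_two

theorem IsLocalRing.card_disc_eq_zero_le [IsLocalRing R] [Finite R]
    (h2 : IsUnit (2 : R)) (h3 : IsUnit (3 : R)) :
    Nat.card {x : R × R // 4 * x.1 ^ 3 + 27 * x.2 ^ 2 = 0} ≤
      Nat.card (nonunits R) ^ 2 + 2 * Nat.card R := by
  classical
  have := Fintype.ofFinite R
  have h4 : IsUnit (4 : R) := by convert h2.mul h2 using 1; norm_num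
  have h27 : IsUnit (27 : R) := by convert h3.pow 3 using 1; norm_num
  simp only [Nat.card_eq_fintype_card, Fintype.card_subtype]
  set S : Finset (R × R) := {x | 4 * x.1 ^ 3 + 27 * x.2 ^ 2 = 0}
  rw [← card_filter_add_card_filter_not (s := S) (·.1 ∈ nonunits R), sq, ← card_product]
  gcongr
  · intro x hx
    simp only [S, mem_filter, mem_univ, true_and, mem_product, mem_nonunits_iff] at hx ⊢
    refine ⟨hx.2, fun hu => hx.2 ?_⟩
    have : IsUnit (-4 * x.1 ^ 3) := by
      rw [show -4 * x.1 ^ 3 = 27 * x.2 ^ 2 by linear_combination -hx.1]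
      exact h27.mul (hu.pow 2)
    exact (isUnit_pow_iff three_ne_zero).1 (isUnit_of_mul_isUnit_right this)
  · refine (card_le_mul_card_image (f := Prod.fst) _ 2 fun a ha => ?_).trans
      (Nat.mul_le_mul_left 2 (card_le_univ _))
    obtain ⟨x, hx, rfl⟩ := mem_image.1 ha
    simp only [S, mem_filter, mem_univ, true_and, mem_nonunits_iff, not_not] at hx
    have hu : IsUnit (-4 * x.1 ^ 3) := h4.neg.mul (hx.2.pow 3)
    calc _ ≤ #{β | 27 * β ^ 2 = -4 * x.1 ^ 3} := card_le_card_of_injOn Prod.snd ?_ ?_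
      _ ≤ 2 := card_filter_mul_sq_eq_le_two h2 hu
    · intro y hy
      simp only [S, coe_filter, mem_filter, mem_univ, true_and, Set.mem_ofPred_eq] at hy ⊢
      rw [← hy.2]
      linear_combination hy.1.1
    · intro y hy y' hy' h
      simp only [S, coe_filter, mem_filter, mem_univ, true_and, Set.mem_ofPred_eq] at hy hy'
      exact Prod.ext (hy.2.trans hy'.2.symm) h

end LocalRing

namespace ZMod

variable {p : ℕ} [hp : Fact p.Prime]

theorem not_isUnit_iff_natCast_dvd {n : ℕ} (hn : n ≠ 0) {x : ZMod (p ^ n)} :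
    ¬IsUnit x ↔ (p : ZMod (p ^ n)) ∣ x := by
  refine ⟨fun hx => ?_, ?_⟩
  · rw [← natCast_zmod_val x, isUnit_natCast_iff_not_dvd_pow hp.out (Nat.pos_of_ne_zero hn),
      not_not] at hx
    rw [← natCast_zmod_val x]
    exact Nat.cast_dvd_cast hx
  · rintro ⟨y, rfl⟩ hu
    exact prime_natCast_not_isUnit_pow hp.out (Nat.pos_of_ne_zero hn) (isUnit_of_mul_isUnit_left hu)

instance {n : ℕ} [NeZero n] : IsLocalRing (ZMod (p ^ n)) :=
  have : Nontrivial (ZMod (p ^ n)) :=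
    nontrivial_iff.2 (Nat.one_lt_pow (NeZero.ne n) hp.out.one_lt).ne'
  .of_nonunits_add fun _ _ ha hb =>
    (not_isUnit_iff_natCast_dvd (NeZero.ne n)).2
      (dvd_add ((not_isUnit_iff_natCast_dvd (NeZero.ne n)).1 ha)
        ((not_isUnit_iff_natCast_dvd (NeZero.ne n)).1 hb))

theorem mul_eq_zero_of_not_isUnit {x y : ZMod (p ^ 2)} (hx : ¬IsUnit x) (hy : ¬IsUnit y) :
    x * y = 0 := by
  obtain ⟨a, rfl⟩ := (not_isUnit_iff_natCast_dvd two_ne_zero).1 hx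
  obtain ⟨b, rfl⟩ := (not_isUnit_iff_natCast_dvd two_ne_zero).1 hy
  rw [mul_mul_mul_comm, ← sq, ← Nat.cast_pow, natCast_self, zero_mul]

theorem card_nonunits_prime_sq_le : Nat.card (nonunits (ZMod (p ^ 2))) ≤ p := by
  calc Nat.card (nonunits (ZMod (p ^ 2)))
      ≤ Nat.card (Set.range fun m : Fin p => ((p * m : ℕ) : ZMod (p ^ 2))) :=
        Nat.card_mono (Set.toFinite _) fun x hx => ?_
    _ ≤ p := (Finite.card_range_le _).trans (Nat.card_fin p).le
  rw [mem_nonunits_iff, ← natCast_zmod_val x, isUnit_natCast_iff_not_dvd_pow hp.out two_pos,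
    not_not] at hx
  obtain ⟨m, hm⟩ := hx
  have hmp : m < p := by
    have := val_lt x
    rw [hm, sq] at this
    exact Nat.lt_of_mul_lt_mul_left this
  exact ⟨⟨m, hmp⟩, show ((p * m : ℕ) : ZMod (p ^ 2)) = x by rw [← hm, natCast_zmod_val]⟩

theorem isUnit_ofNat_prime_sq {m : ℕ} [m.AtLeastTwo] (h : ¬p ∣ m) :
    IsUnit (OfNat.ofNat m : ZMod (p ^ 2)) := by
  rw [← Nat.cast_ofNat]
  exact (isUnit_natCast_iff_not_dvd_pow hp.out two_pos).2 h

end ZMod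

theorem Nat.eq_prod_primeFactors_of_squarefree {M : Type*} [CommMonoid M] (f : ℕ → M)
    (h_mult : ∀ m n, m.Coprime n → f (m * n) = f m * f n) (h_one : f 1 = 1) {n : ℕ}
    (hn : Squarefree n) : f n = ∏ p ∈ n.primeFactors, f p := by
  rw [Nat.multiplicative_factorization f h_mult h_one hn.ne_zero,
    Nat.prod_factorization_eq_prod_primeFactors]
  refine prod_congr rfl fun p hp => ?_
  rw [Nat.factorization_eq_one_of_squarefree hn (Nat.prime_of_mem_primeFactors hp)
    (Nat.dvd_of_mem_primeFactors hp), pow_one]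

theorem exists_pow_card_primeFactors_le_rpow {c : ℝ} (hc : 1 ≤ c) {ε : ℝ} (hε : 0 < ε) :
    ∃ C : ℝ, ∀ n : ℕ, n ≠ 0 → c ^ #n.primeFactors ≤ C * (n : ℝ) ^ ε := by
  set B := ⌈c ^ (1 / ε)⌉₊
  refine ⟨c ^ B, fun n hn => ?_⟩
  have hsmall : #{p ∈ n.primeFactors | p ≤ B} ≤ B := by
    calc #{p ∈ n.primeFactors | p ≤ B} ≤ #(Icc 1 B) := card_le_card fun p hp => by
          simp only [mem_filter, Nat.mem_primeFactors] at hp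
          exact mem_Icc.2 ⟨hp.1.1.one_le, hp.2⟩
      _ = B := Nat.card_Icc 1 B ▸ by simp
  have hlarge (p : ℕ) (hp : ¬p ≤ B) : c ≤ (p : ℝ) ^ ε :=
    calc c = (c ^ (1 / ε)) ^ ε := by
          rw [← Real.rpow_mul (by linarith), one_div_mul_cancel hε.ne', Real.rpow_one]
      _ ≤ (p : ℝ) ^ ε := by
          gcongr
          exact (Nat.le_ceil _).trans (by exact_mod_cast (not_le.1 hp).le)
  calc c ^ #n.primeFactors = ∏ p ∈ n.primeFactors, c := (prod_const c).symm
    _ ≤ ∏ p ∈ n.primeFactors, (if p ≤ B then c else 1) * (p : ℝ) ^ ε := by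
        refine prod_le_prod (fun _ _ => by linarith) fun p hp => ?_
        split_ifs with hpB
        · exact le_mul_of_one_le_right (by linarith)
            (Real.one_le_rpow (by exact_mod_cast (Nat.prime_of_mem_primeFactors hp).one_le) hε.le)
        · rw [one_mul]; exact hlarge p hpB
    _ = c ^ #{p ∈ n.primeFactors | p ≤ B} * (∏ p ∈ n.primeFactors, (p : ℝ)) ^ ε := by
        rw [prod_mul_distrib, prod_ite, prod_const, prod_const_one, mul_one,
          Real.finsetProd_rpow _ _ fun _ _ => by positivity]
    _ ≤ c ^ B * (n : ℝ) ^ ε := by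
        gcongr
        rw [← Nat.cast_prod]
        exact_mod_cast Nat.le_of_dvd (Nat.pos_of_ne_zero hn) (Nat.prod_primeFactors_dvd n)

namespace ZMod

variable {n : ℕ} [NeZero n]

section

variable {M : Type*} [AddCommMonoid M]

theorem sum_range_natCast (f : ZMod n → M) : ∑ i ∈ range n, f i = ∑ x, f x := by
  refine sum_nbij (↑) (fun _ _ => mem_univ _) (fun i hi j hj h => ?_)
    (fun x _ => ⟨x.val, mem_range.2 (val_lt x), natCast_zmod_val x⟩) fun _ _ => rfl
  rw [coe_range, Set.mem_Iio] at hi hj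
  simpa [val_natCast_of_lt hi, val_natCast_of_lt hj] using congrArg val h

theorem sum_range_add_natCast (G : ZMod n → M) (m : ZMod n) :
    ∑ i ∈ range n, G (m + i) = ∑ x, G x := by
  rw [sum_range_natCast (fun x => G (m + x))]
  exact Equiv.sum_comp (Equiv.addLeft m) G

theorem sum_range_mul_add_natCast (G : ZMod n → M) (m : ZMod n) (j : ℕ) :
    ∑ i ∈ range (j * n), G (m + i) = j • ∑ x, G x := by
  induction j with
  | zero => simp
  | succ j ih =>
    rw [add_mul, one_mul, Finset.sum_range_add, ih, succ_nsmul]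
    congr 1
    simpa using sum_range_add_natCast G m

end

theorem abs_sum_range_add_natCast_sub_le (G : ZMod n → ℝ) (hG : ∀ x, 0 ≤ G x) (m : ZMod n)
    (L : ℕ) : |∑ i ∈ range L, G (m + i) - L / n * ∑ x, G x| ≤ ∑ x, G x := by
  set T := ∑ x, G x
  have hn : (0 : ℝ) < n := by exact_mod_cast Nat.pos_of_neZero n
  obtain ⟨j, r, hr, rfl⟩ : ∃ j r, r < n ∧ L = j * n + r :=
    ⟨L / n, L % n, Nat.mod_lt L (Nat.pos_of_neZero n), (Nat.div_add_mod' L n).symm⟩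
  have hrem : ∑ i ∈ range r, G (m + ↑(j * n + i)) = ∑ i ∈ range r, G (m + i) := by simp
  have hR : ∑ i ∈ range r, G (m + i) ≤ T :=
    (sum_le_sum_of_subset_of_nonneg (range_subset_range.2 hr.le) fun _ _ _ => hG _).trans
      (sum_range_add_natCast G m).le
  have hR0 : 0 ≤ ∑ i ∈ range r, G (m + i) := sum_nonneg fun _ _ => hG _
  have hT : 0 ≤ T := sum_nonneg fun _ _ => hG _
  have hrT : r / n * T ≤ T :=
    mul_le_of_le_one_left hT ((div_le_one hn).2 (by exact_mod_cast hr.le))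
  have hrT0 : 0 ≤ r / n * T := by positivity
  rw [Finset.sum_range_add, sum_range_mul_add_natCast, hrem, nsmul_eq_mul, Nat.cast_add,
    Nat.cast_mul, add_div, mul_div_cancel_right₀ _ hn.ne', add_mul, abs_le]
  constructor <;> linarith

theorem abs_sum_Icc_floor_sub_le (G : ZMod n → ℝ) (hG : ∀ x, 0 ≤ G x) {z : ℝ}
    (hz : 0 ≤ z) : |∑ A ∈ Icc (-⌊z⌋) ⌊z⌋, G A - 2 * z / n * ∑ x, G x| ≤ 2 * ∑ x, G x := by
  set T := ∑ x, G x
  have hn : (1 : ℝ) ≤ n := by exact_mod_cast Nat.one_le_iff_ne_zero.2 (NeZero.ne n)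
  have hT : 0 ≤ T := sum_nonneg fun _ _ => hG _
  set L := (⌊z⌋ + 1 - -⌊z⌋).toNat
  have hL : (L : ℝ) = 2 * ⌊z⌋ + 1 := by
    have : 0 ≤ ⌊z⌋ := Int.floor_nonneg.2 hz
    rw [show (L : ℝ) = ((L : ℤ) : ℝ) by norm_cast, Int.toNat_of_nonneg (by omega)]
    push_cast; ring
  have hLz : |(L : ℝ) - 2 * z| ≤ 1 := by
    rw [hL, abs_le]
    constructor <;> linarith [Int.floor_le z, Int.lt_floor_add_one z]
  have hsum : ∑ A ∈ Icc (-⌊z⌋) ⌊z⌋, G A = ∑ i ∈ range L, G (-⌊z⌋ + i) := by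
    rw [Int.Icc_eq_finset_map, sum_map]
    exact sum_congr rfl fun i _ => by simp
  calc |∑ A ∈ Icc (-⌊z⌋) ⌊z⌋, G A - 2 * z / n * T|
      ≤ |∑ i ∈ range L, G (-⌊z⌋ + i) - L / n * T| + |(L - 2 * z) / n * T| := by
        rw [hsum]
        refine (abs_sub_le _ (L / n * T) _).trans_eq ?_
        congr 2
        ring
    _ ≤ T + T := by
        refine add_le_add (abs_sum_range_add_natCast_sub_le G hG _ L) ?_
        rw [abs_mul, abs_div, abs_of_nonneg hT, abs_of_pos (by linarith : (0 : ℝ) < n)]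
        exact mul_le_of_le_one_left hT ((div_le_one (by linarith)).2 (hLz.trans hn))
    _ = 2 * T := by ring

end ZMod

theorem gammaCount_eq_of_cast_eq_mul_sq {q : ℕ} {m n : ℤ} {c : ZMod q} (hc : IsUnit c)
    (h : (m : ZMod q) = n * c ^ 2) : gammaCount q m = gammaCount q n := by
  refine (Nat.card_congr <| (Units.mulRight hc.unit).subtypeEquiv fun β => ?_).symm
  rw [h, Units.mulRight_apply, IsUnit.unit_spec, mul_pow, ← mul_assoc, (hc.pow 2).mul_left_inj]

theorem gammaCount_one (a : ℤ) : gammaCount 1 a = 1 :=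
  Nat.card_eq_one_iff_exists.2 ⟨⟨0, Subsingleton.elim _ _⟩, fun _ => Subsingleton.elim _ _⟩

theorem rhoDisc_one : rhoDisc 1 = 1 :=
  Nat.card_eq_one_iff_exists.2 ⟨⟨0, Subsingleton.elim _ _⟩, fun _ => Subsingleton.elim _ _⟩

theorem gammaCount_mul {m n : ℕ} (h : m.Coprime n) (a : ℤ) :
    gammaCount (m * n) a = gammaCount m a * gammaCount n a := by
  rw [gammaCount, gammaCount, gammaCount, ← Nat.card_prod,
    ← Nat.card_congr (Equiv.subtypeProdEquivProd)]
  exact Nat.card_congr <| (ZMod.chineseRemainder h).toEquiv.subtypeEquiv fun β => by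
    simp [← (ZMod.chineseRemainder h).injective.eq_iff, Prod.ext_iff, map_ofNat]

theorem rhoDisc_mul {m n : ℕ} (h : m.Coprime n) :
    rhoDisc (m * n) = rhoDisc m * rhoDisc n := by
  let e := ZMod.chineseRemainder h
  rw [rhoDisc, rhoDisc, rhoDisc, ← Nat.card_prod, ← Nat.card_congr (Equiv.subtypeProdEquivProd)]
  refine Nat.card_congr <| ((e.toEquiv.prodCongr e.toEquiv).trans
    (Equiv.prodProdProdComm _ _ _ _)).subtypeEquiv fun x => ?_
  simp [← e.injective.eq_iff, Prod.ext_iff, e, map_ofNat]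

theorem rhoDisc_prime_sq_le {p : ℕ} (hp : p.Prime) : rhoDisc (p ^ 2) ≤ 3 * p ^ 2 := by
  rcases eq_or_ne p 2 with rfl | hp2
  · rw [rhoDisc, Nat.card_eq_fintype_card]; decide
  rcases eq_or_ne p 3 with rfl | hp3
  · rw [rhoDisc, Nat.card_eq_fintype_card]; decide
  have := Fact.mk hp
  have h2 : IsUnit (2 : ZMod (p ^ 2)) :=
    ZMod.isUnit_ofNat_prime_sq fun h => hp2 ((Nat.prime_dvd_prime_iff_eq hp Nat.prime_two).1 h)
  have h3 : IsUnit (3 : ZMod (p ^ 2)) :=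
    ZMod.isUnit_ofNat_prime_sq fun h => hp3 ((Nat.prime_dvd_prime_iff_eq hp Nat.prime_three).1 h)
  calc rhoDisc (p ^ 2) ≤ Nat.card (nonunits (ZMod (p ^ 2))) ^ 2 + 2 * Nat.card (ZMod (p ^ 2)) :=
        IsLocalRing.card_disc_eq_zero_le h2 h3
    _ ≤ p ^ 2 + 2 * p ^ 2 := by
        rw [Nat.card_zmod]
        gcongr
        exact ZMod.card_nonunits_prime_sq_le
    _ = 3 * p ^ 2 := by ring

theorem gammaCount_prime_sq_neg_four_mul_cube_of_dvd_sub {p : ℕ} (hp : p.Prime) {a b : ℤ}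
    (hab : (p : ℤ) ∣ a - b) :
    gammaCount (p ^ 2) (-4 * a ^ 3) = gammaCount (p ^ 2) (-4 * b ^ 3) := by
  have := Fact.mk hp
  rcases eq_or_ne p 2 with rfl | hp2
  · refine gammaCount_eq_of_cast_eq_mul_sq isUnit_one ?_
    have h4 : (4 : ZMod (2 ^ 2)) = 0 := by decide
    push_cast
    simp [h4]
  have hab' : ¬IsUnit ((a : ZMod (p ^ 2)) - b) := by
    rw [ZMod.not_isUnit_iff_natCast_dvd two_ne_zero]
    simpa using map_dvd (Int.castRingHom (ZMod (p ^ 2))) hab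
  by_cases ha : IsUnit (a : ZMod (p ^ 2))
  · set d := ((b : ZMod (p ^ 2)) - a) * ↑ha.unit⁻¹ with hd_def
    have hd : ¬IsUnit d := fun hd =>
      hab' (by simpa [neg_sub] using (isUnit_of_mul_isUnit_left hd).neg)
    have h2 : IsUnit (2 : ZMod (p ^ 2)) :=
      ZMod.isUnit_ofNat_prime_sq fun h => hp2 ((Nat.prime_dvd_prime_iff_eq hp Nat.prime_two).1 h)
    obtain ⟨c, hc, hc2⟩ :=
      exists_isUnit_sq_eq_one_add h2 (by rw [pow_two d, ZMod.mul_eq_zero_of_not_isUnit hd hd])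
    have hb : (b : ZMod (p ^ 2)) = a * c ^ 2 := by
      rw [hc2, mul_add, mul_one, hd_def, mul_comm, mul_assoc, ha.val_inv_mul, mul_one,
        add_sub_cancel]
    refine (gammaCount_eq_of_cast_eq_mul_sq (hc.pow 3) ?_).symm
    push_cast
    rw [hb]
    ring
  · have hb : ¬IsUnit (b : ZMod (p ^ 2)) := by
      simpa using IsLocalRing.nonunits_add ha (mt (IsUnit.neg_iff _).1 hab')
    have hcube (x : ZMod (p ^ 2)) (hx : ¬IsUnit x) : x ^ 3 = 0 := by
      rw [show x ^ 3 = x * x * x by ring, ZMod.mul_eq_zero_of_not_isUnit hx hx, zero_mul]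
    refine gammaCount_eq_of_cast_eq_mul_sq isUnit_one ?_
    push_cast
    rw [hcube _ ha, hcube _ hb]
    ring

theorem rhoDisc_eq_sum_range (q : ℕ) [NeZero q] :
    rhoDisc q = ∑ a ∈ range q, gammaCount q (-4 * (a : ℤ) ^ 3) := by
  rw [rhoDisc, Nat.card_congr (Equiv.subtypeProdEquivSigmaSubtype fun α β : ZMod q =>
    4 * α ^ 3 + 27 * β ^ 2 = 0), Nat.card_sigma, ← ZMod.sum_range_natCast]
  refine sum_congr rfl fun a _ => Nat.card_congr (Equiv.subtypeEquivRight fun β => ?_)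
  push_cast
  constructor <;> intro h <;> linear_combination -h

section Squarefree

variable {k : ℕ} (hk : Squarefree k)
include hk

theorem gammaCount_sq_eq_prod (a : ℤ) :
    gammaCount (k ^ 2) a = ∏ p ∈ k.primeFactors, gammaCount (p ^ 2) a :=
  Nat.eq_prod_primeFactors_of_squarefree (fun k => gammaCount (k ^ 2) a)
    (fun m n h => by rw [mul_pow, gammaCount_mul (h.pow 2 2)]) (by rw [one_pow, gammaCount_one]) hk

theorem rhoDisc_sq_eq_prod : rhoDisc (k ^ 2) = ∏ p ∈ k.primeFactors, rhoDisc (p ^ 2) :=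
  Nat.eq_prod_primeFactors_of_squarefree (fun k => rhoDisc (k ^ 2))
    (fun m n h => by rw [mul_pow, rhoDisc_mul (h.pow 2 2)]) (by rw [one_pow, rhoDisc_one]) hk

theorem gammaCount_sq_neg_four_mul_cube_of_dvd_sub {a b : ℤ} (hab : (k : ℤ) ∣ a - b) :
    gammaCount (k ^ 2) (-4 * a ^ 3) = gammaCount (k ^ 2) (-4 * b ^ 3) := by
  rw [gammaCount_sq_eq_prod hk, gammaCount_sq_eq_prod hk]
  exact prod_congr rfl fun p hp => gammaCount_prime_sq_neg_four_mul_cube_of_dvd_sub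
    (Nat.prime_of_mem_primeFactors hp)
    ((Int.natCast_dvd_natCast.2 (Nat.dvd_of_mem_primeFactors hp)).trans hab)

theorem rhoDisc_sq_le : rhoDisc (k ^ 2) ≤ 3 ^ #k.primeFactors * k ^ 2 :=
  calc rhoDisc (k ^ 2) = ∏ p ∈ k.primeFactors, rhoDisc (p ^ 2) := rhoDisc_sq_eq_prod hk
    _ ≤ ∏ p ∈ k.primeFactors, 3 * p ^ 2 :=
        prod_le_prod' fun p hp => rhoDisc_prime_sq_le (Nat.prime_of_mem_primeFactors hp)
    _ = 3 ^ #k.primeFactors * k ^ 2 := by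
        rw [prod_mul_distrib, prod_const, prod_pow, Nat.prod_primeFactors_of_squarefree hk]

theorem gammaCount_sq_neg_four_mul_cube_eq_val [NeZero k] (a : ℤ) :
    gammaCount (k ^ 2) (-4 * a ^ 3) = gammaCount (k ^ 2) (-4 * ((a : ZMod k).val : ℤ) ^ 3) :=
  gammaCount_sq_neg_four_mul_cube_of_dvd_sub hk <| by
    rw [ZMod.val_intCast]
    exact (Int.mod_modEq a k).dvd

theorem rhoDisc_sq_eq_mul_sum [NeZero k] :
    rhoDisc (k ^ 2) = k * ∑ x : ZMod k, gammaCount (k ^ 2) (-4 * (x.val : ℤ) ^ 3) := by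
  rw [← smul_eq_mul, ← ZMod.sum_range_mul_add_natCast _ 0, ← sq, rhoDisc_eq_sum_range]
  refine sum_congr rfl fun a _ => ?_
  rw [zero_add, gammaCount_sq_neg_four_mul_cube_eq_val hk, Int.cast_natCast]

end Squarefree

theorem stmt18 (ε : ℝ) (hε : 0 < ε) :
    ∃ C : ℝ, ∀ k : ℕ, 0 < k → Squarefree k → ∀ z : ℝ, 1 ≤ z →
      |(∑ A ∈ Finset.Icc (-⌊z⌋) ⌊z⌋, (gammaCount (k ^ 2) (-4 * A ^ 3) : ℝ))
          - 2 * z * (rhoDisc (k ^ 2) : ℝ) / ((k : ℝ) ^ 2)| ≤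
        C * (k : ℝ) ^ ((1 : ℝ) + ε) := by
  obtain ⟨C, hC⟩ := exists_pow_card_primeFactors_le_rpow (c := 3) (by norm_num) hε
  refine ⟨2 * C, fun k hk hsq z hz => ?_⟩
  have : NeZero k := ⟨hk.ne'⟩
  have hk0 : (0 : ℝ) < k := by exact_mod_cast hk
  set G : ZMod k → ℝ := fun x => gammaCount (k ^ 2) (-4 * (x.val : ℤ) ^ 3)
  have hρ : (rhoDisc (k ^ 2) : ℝ) = k * ∑ x, G x := by
    rw [rhoDisc_sq_eq_mul_sum hsq]; push_cast; rfl
  have hT : ∑ x, G x ≤ 3 ^ #k.primeFactors * k := by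
    have h : (k : ℝ) * ∑ x, G x ≤ k * (3 ^ #k.primeFactors * k) := by
      rw [← hρ]
      exact_mod_cast (rhoDisc_sq_le hsq).trans_eq (by ring)
    exact le_of_mul_le_mul_left h hk0
  calc _ = |∑ A ∈ Icc (-⌊z⌋) ⌊z⌋, G A - 2 * z / k * ∑ x, G x| := by
        rw [hρ]
        congr 2
        · exact sum_congr rfl fun A _ => by rw [gammaCount_sq_neg_four_mul_cube_eq_val hsq]
        · field_simp
    _ ≤ 2 * ∑ x, G x := ZMod.abs_sum_Icc_floor_sub_le G (fun _ => by positivity) (by linarith)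
    _ ≤ 2 * (C * k ^ ε * k) := by gcongr; exact hT.trans (by gcongr; exact hC k hk.ne')
    _ = 2 * C * (k : ℝ) ^ ((1 : ℝ) + ε) := by rw [Real.rpow_add hk0, Real.rpow_one]; ring
end
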